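/- arXiv:2005.08951 — 2 statements merged into one kernel-verified Lean document; each statement's English description precedes it below -/
import Mathlib

section
/- For a commutative association scheme, the Krein parameter q_{ij}^k equals |X| · tr(E_k (E_i ∘ E_j)) / rank(E_k), and Σ_k q_{ij}^k m_k / |X| equals the sum of the diagonal entries of E_i ∘ E_j, where m_k = rank E_k; in particular q_{ij}^k ≥ 0 for all i,j,k. -/
open Matrix ComplexOrder

/-- trace of an idempotent complex matrix equals its rank -/
lemma trace_eq_rank_of_idem {X : Type*} [Fintype X] [DecidableEq X] (A : Matrix X X ℂ)
    (h : A * A = A) : A.trace = (A.rank : ℂ) := by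
  set f := A.mulVecLin with hf
  have hff : ∀ y, f (f y) = f y := by
    intro y
    have : f.comp f = f := by rw [hf, ← Matrix.mulVecLin_mul, h]
    exact congrFun (congrArg DFunLike.coe this) y
  have hproj : LinearMap.IsProj (LinearMap.range f) f := by
    refine ⟨fun x => ⟨x, rfl⟩, ?_⟩
    rintro _ ⟨y, rfl⟩
    exact hff y
  have htr : LinearMap.trace ℂ (X → ℂ) f = (Module.finrank ℂ (LinearMap.range f) : ℂ) :=
    hproj.trace
  have h2 : LinearMap.trace ℂ (X → ℂ) f = A.trace := by
    rw [LinearMap.trace_eq_matrix_trace ℂ (Pi.basisFun ℂ X) f,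
      LinearMap.toMatrix_eq_toMatrix']
    congr 1
    rw [hf, ← Matrix.toLin'_apply', LinearMap.toMatrix'_toLin']
  rw [← h2, htr]
  rfl

lemma trace_conjTranspose_mul_self_nn {X Y : Type*} [Fintype X] [Fintype Y]
    (F : Matrix X Y ℂ) :
    (Fᴴ * F).trace = ((∑ y, ∑ x, Complex.normSq (F x y) : ℝ) : ℂ) := by
  simp only [Matrix.trace, Matrix.diag, Matrix.mul_apply, Matrix.conjTranspose_apply]
  push_cast
  congr 1; ext y; congr 1; ext x
  rw [Complex.normSq_eq_conj_mul_self]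
  rfl

lemma hadamard_factor {X : Type*} [Fintype X] [DecidableEq X] (A B : Matrix X X ℂ)
    (hA : A.IsHermitian) (hB : B.IsHermitian) (hAi : A * A = A) (hBi : B * B = B) :
    A ⊙ B = (Matrix.of fun x (p : X × X) => A x p.1 * B x p.2) *
      (Matrix.of fun x (p : X × X) => A x p.1 * B x p.2)ᴴ := by
  ext x y
  simp only [Matrix.mul_apply, Matrix.conjTranspose_apply, Matrix.of_apply,
    Matrix.hadamard_apply, Fintype.sum_prod_type]
  simp only [star_mul', RingHom.id_apply]
  rw [eq_comm]
  have hAxy : (∑ a, A x a * star (A y a)) = A x y := by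
    have h1 : ∀ a, star (A y a) = A a y := fun a => by
      have := congrFun (congrFun hA.eq a) y
      rwa [Matrix.conjTranspose_apply] at this
    simp_rw [h1]
    rw [← Matrix.mul_apply, hAi]
  have hBxy : (∑ b, B x b * star (B y b)) = B x y := by
    have h1 : ∀ b, star (B y b) = B b y := fun b => by
      have := congrFun (congrFun hB.eq b) y
      rwa [Matrix.conjTranspose_apply] at this
    simp_rw [h1]
    rw [← Matrix.mul_apply, hBi]
  calc ∑ a, ∑ b, A x a * B x b * (star (A y a) * star (B y b))
      = (∑ a, A x a * star (A y a)) * (∑ b, B x b * star (B y b)) := by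
        rw [Finset.sum_mul_sum]
        refine Finset.sum_congr rfl fun a _ => Finset.sum_congr rfl fun b _ => by ring
    _ = A x y * B x y := by rw [hAxy, hBxy]

/-- For a commutative association scheme with primitive idempotents `E_k` and Krein
parameters `q_{ij}^k`: each `q_{ij}^k` equals `|X| · tr(E_k (E_i ∘ E_j)) / rank E_k`,
the weighted sum `∑_k q_{ij}^k m_k / |X|` equals the trace of `E_i ∘ E_j`
(i.e. the sum of its diagonal entries), and all `q_{ij}^k` are nonnegative. -/
theorem krein_parameters_trace_formula {X : Type*} [Fintype X] [DecidableEq X] [Nonempty X]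
    {d : ℕ} (E : Fin (d + 1) → Matrix X X ℂ)
    (hHerm : ∀ k, (E k).IsHermitian)
    (hidem : ∀ k, E k * E k = E k)
    (horth : ∀ k l, k ≠ l → E k * E l = 0)
    (hsum : (∑ k, E k) = (1 : Matrix X X ℂ))
    (q : Fin (d + 1) → Fin (d + 1) → Fin (d + 1) → ℝ)
    (hq : ∀ i j, E i ⊙ E j = ((Fintype.card X : ℂ))⁻¹ • ∑ k, (q i j k : ℂ) • E k)
    (m : Fin (d + 1) → ℕ) (hm : ∀ k, m k = (E k).rank)
    (hmpos : ∀ k, 0 < m k) :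
    (∀ i j k, (q i j k : ℂ) =
        (Fintype.card X : ℂ) * (E k * (E i ⊙ E j)).trace / (m k : ℂ)) ∧
    (∀ i j, (∑ k, (q i j k : ℂ) * (m k : ℂ)) / (Fintype.card X : ℂ) =
        (E i ⊙ E j).trace) ∧
    (∀ i j k, 0 ≤ q i j k) := by
  have hcard0 : (Fintype.card X : ℂ) ≠ 0 := by
    exact_mod_cast Nat.cast_ne_zero.mpr Fintype.card_ne_zero
  have hm0 : ∀ k, (m k : ℂ) ≠ 0 := fun k =>
    Nat.cast_ne_zero.mpr (hmpos k).ne'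
  have htrE : ∀ k, (E k).trace = (m k : ℂ) := fun k => by
    rw [trace_eq_rank_of_idem (E k) (hidem k), hm k]
  have htrEE : ∀ k l, (E k * E l).trace = if k = l then (m k : ℂ) else 0 := by
    intro k l
    by_cases h : k = l
    · subst h; rw [hidem, htrE, if_pos rfl]
    · rw [horth k l h, Matrix.trace_zero, if_neg h]
  have key : ∀ i j k, (E k * (E i ⊙ E j)).trace =
      (Fintype.card X : ℂ)⁻¹ * ((q i j k : ℂ) * (m k : ℂ)) := by
    intro i j k
    rw [hq i j, Matrix.mul_smul, Matrix.trace_smul, Matrix.mul_sum, Matrix.trace_sum]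
    rw [smul_eq_mul]
    congr 1
    have hterm : ∀ l, (E k * ((q i j l : ℂ) • E l)).trace =
        (q i j l : ℂ) * (E k * E l).trace := fun l => by
      rw [Matrix.mul_smul, Matrix.trace_smul, smul_eq_mul]
    simp_rw [hterm, htrEE]
    rw [Finset.sum_eq_single k]
    · rw [if_pos rfl]
    · intro l _ hl
      rw [if_neg (Ne.symm hl), mul_zero]
    · intro h; exact absurd (Finset.mem_univ k) h
  refine ⟨?_, ?_, ?_⟩
  · intro i j k
    rw [key i j k]
    field_simp
    rw [mul_div_assoc, div_self (hm0 k), mul_one]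
  · intro i j
    rw [hq i j, Matrix.trace_smul, Matrix.trace_sum]
    simp_rw [Matrix.trace_smul, smul_eq_mul, htrE]
    rw [div_eq_inv_mul]
  · intro i j k
    set D : Matrix X (X × X) ℂ := Matrix.of fun x (p : X × X) => E i x p.1 * E j x p.2 with hD
    have hDD : E i ⊙ E j = D * Dᴴ :=
      hadamard_factor (E i) (E j) (hHerm i) (hHerm j) (hidem i) (hidem j)
    set F := E k * D with hFdef
    have hFF : Fᴴ * F = Dᴴ * (E k * D) := by
      rw [hFdef, Matrix.conjTranspose_mul, (hHerm k).eq, Matrix.mul_assoc, ← Matrix.mul_assoc (E k),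
        hidem k]
    have htr1 : (E k * (E i ⊙ E j)).trace = (Fᴴ * F).trace := by
      rw [hDD, hFF, ← Matrix.mul_assoc, Matrix.trace_mul_comm]
    set r : ℝ := ∑ y, ∑ x, Complex.normSq (F x y) with hr
    have hr0 : 0 ≤ r := Finset.sum_nonneg fun y _ =>
      Finset.sum_nonneg fun x _ => Complex.normSq_nonneg _
    have htr2 : (E k * (E i ⊙ E j)).trace = (r : ℂ) := by
      rw [htr1, trace_conjTranspose_mul_self_nn]
    have heq : (q i j k : ℂ) * (m k : ℂ) = (Fintype.card X : ℂ) * (r : ℂ) := by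
      have := key i j k
      rw [htr2] at this
      field_simp at this
      rw [← this]; ring
    have heqR : q i j k * (m k : ℝ) = (Fintype.card X : ℝ) * r := by
      exact_mod_cast heq
    have hmR : (0 : ℝ) < (m k : ℝ) := by exact_mod_cast hmpos k
    nlinarith [Fintype.card_pos (α := X), mul_nonneg (Nat.cast_nonneg (α := ℝ) (Fintype.card X)) hr0]
end

section
/- Given a probability vector (p_0,…,p_{d-1}) with all p_i > 0, the d×d matrix U with first row (√p_0,…,√p_{d-1}), first column (√p_0, −√p_1,…,−√p_{d-1})ᵀ, and remaining entries U_{ij} = δ_{ij} − √(p_i p_j)/(1+√p_0) for i,j ≥ 1, is orthogonal (UᵀU = I). -/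
open Matrix

/-- Given a strictly positive probability vector `(p_0,…,p_d)`, the matrix `U` with
first row `(√p_0,…,√p_d)`, first column `(√p_0, −√p_1,…,−√p_d)ᵀ`, and remaining
entries `U_{ij} = δ_{ij} − √(p_i p_j)/(1+√p_0)` for `i,j ≥ 1`, is orthogonal. -/
theorem unitary_dilation_of_probability_vector {d : ℕ}
    (p : Fin (d + 1) → ℝ) (hpos : ∀ i, 0 < p i) (hsum : ∑ i, p i = 1)
    (U : Matrix (Fin (d + 1)) (Fin (d + 1)) ℝ)
    (hU : ∀ i j, U i j =
      if i = 0 then Real.sqrt (p j)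
      else if j = 0 then -Real.sqrt (p i)
      else (if i = j then 1 else 0) -
        Real.sqrt (p i * p j) / (1 + Real.sqrt (p 0))) :
    Uᵀ * U = 1 := by
  have hp0 := hpos 0
  have hqpos : ∀ i, 0 < Real.sqrt (p i) := fun i => Real.sqrt_pos.2 (hpos i)
  have hqsq : ∀ i, Real.sqrt (p i) * Real.sqrt (p i) = p i :=
    fun i => Real.mul_self_sqrt (hpos i).le
  have hden : (1 + Real.sqrt (p 0)) ≠ 0 := by have := hqpos 0; positivity
  have hmul : ∀ i j, Real.sqrt (p i * p j) = Real.sqrt (p i) * Real.sqrt (p j) :=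
    fun i j => Real.sqrt_mul (hpos i).le _
  have hsum' : ∑ i : Fin d, p i.succ = 1 - p 0 := by
    rw [Fin.sum_univ_succ] at hsum; linarith
  have key : 1 - p 0 = (1 - Real.sqrt (p 0)) * (1 + Real.sqrt (p 0)) := by
    have := hqsq 0; nlinarith
  have h0s : ∀ i : Fin d, ¬((0 : Fin (d + 1)) = i.succ) :=
    fun i h => (Fin.succ_ne_zero i) h.symm
  ext j k
  rw [Matrix.mul_apply]
  simp only [transpose_apply, hU, hmul]
  rw [Fin.sum_univ_succ]
  simp only [Fin.succ_ne_zero, h0s, ite_true, ite_false, ↓reduceIte, if_true, if_false]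
  rcases Fin.eq_zero_or_eq_succ j with rfl | ⟨j', rfl⟩
  · rcases Fin.eq_zero_or_eq_succ k with rfl | ⟨k', rfl⟩
    · simp only [eq_self_iff_true, ite_true, ↓reduceIte, neg_mul_neg, hqsq,
        Matrix.one_apply_eq, hsum']
      have := hqsq 0; linarith
    · simp only [Fin.succ_ne_zero, h0s, ite_true, ite_false, ↓reduceIte, if_true,
        if_false, Matrix.one_apply_ne (Ne.symm (Fin.succ_ne_zero k'))]
      have expand : ∀ i : Fin d,
          (-Real.sqrt (p i.succ)) * ((if i.succ = k'.succ then (1:ℝ) else 0) -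
            Real.sqrt (p i.succ) * Real.sqrt (p k'.succ) / (1 + Real.sqrt (p 0))) =
          (if i = k' then -Real.sqrt (p k'.succ) else 0) +
            p i.succ * (Real.sqrt (p k'.succ) / (1 + Real.sqrt (p 0))) := by
        intro i
        simp only [Fin.succ_inj]
        by_cases h : i = k'
        · subst h
          simp only [eq_self_iff_true, ite_true, if_true]
          linear_combination (Real.sqrt (p i.succ) / (1 + Real.sqrt (p 0))) * hqsq i.succ
        · simp only [if_neg h]
          linear_combination (Real.sqrt (p k'.succ) / (1 + Real.sqrt (p 0))) * hqsq i.succ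
      rw [Finset.sum_congr rfl fun i _ => expand i]
      rw [Finset.sum_add_distrib, Finset.sum_ite_eq' _ k', ← Finset.sum_mul, hsum']
      simp only [Finset.mem_univ, if_pos, key]
      field_simp
      ring
  · rcases Fin.eq_zero_or_eq_succ k with rfl | ⟨k', rfl⟩
    · simp only [Fin.succ_ne_zero, h0s, ite_true, ite_false, ↓reduceIte, if_true,
        if_false, Matrix.one_apply_ne (Fin.succ_ne_zero j')]
      have expand : ∀ i : Fin d,
          ((if i.succ = j'.succ then (1:ℝ) else 0) -
            Real.sqrt (p i.succ) * Real.sqrt (p j'.succ) / (1 + Real.sqrt (p 0))) *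
            (-Real.sqrt (p i.succ)) =
          (if i = j' then -Real.sqrt (p j'.succ) else 0) +
            p i.succ * (Real.sqrt (p j'.succ) / (1 + Real.sqrt (p 0))) := by
        intro i
        simp only [Fin.succ_inj]
        by_cases h : i = j'
        · subst h
          simp only [eq_self_iff_true, ite_true, if_true]
          linear_combination (Real.sqrt (p i.succ) / (1 + Real.sqrt (p 0))) * hqsq i.succ
        · simp only [if_neg h]
          linear_combination (Real.sqrt (p j'.succ) / (1 + Real.sqrt (p 0))) * hqsq i.succ
      rw [Finset.sum_congr rfl fun i _ => expand i]
      rw [Finset.sum_add_distrib, Finset.sum_ite_eq' _ j', ← Finset.sum_mul, hsum']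
      simp only [Finset.mem_univ, if_pos, key]
      field_simp
      ring
    · simp only [Fin.succ_ne_zero, h0s, ite_true, ite_false, ↓reduceIte, if_true,
        if_false]
      have expand : ∀ i : Fin d,
          ((if i.succ = j'.succ then (1:ℝ) else 0) -
              Real.sqrt (p i.succ) * Real.sqrt (p j'.succ) / (1 + Real.sqrt (p 0))) *
            ((if i.succ = k'.succ then (1:ℝ) else 0) -
              Real.sqrt (p i.succ) * Real.sqrt (p k'.succ) / (1 + Real.sqrt (p 0))) =
          (if i = j' then (if j' = k' then (1:ℝ) else 0) else 0) -
            (if i = j' then Real.sqrt (p j'.succ) * Real.sqrt (p k'.succ) /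
              (1 + Real.sqrt (p 0)) else 0) -
            (if i = k' then Real.sqrt (p j'.succ) * Real.sqrt (p k'.succ) /
              (1 + Real.sqrt (p 0)) else 0) +
            p i.succ * (Real.sqrt (p j'.succ) * Real.sqrt (p k'.succ) /
              (1 + Real.sqrt (p 0)) / (1 + Real.sqrt (p 0))) := by
        intro i
        simp only [Fin.succ_inj]
        by_cases h1 : i = j' <;> by_cases h2 : i = k'
        · subst h1; subst h2
          simp only [eq_self_iff_true, ite_true, if_true]
          linear_combination (Real.sqrt (p i.succ) * Real.sqrt (p i.succ) /
            (1 + Real.sqrt (p 0)) / (1 + Real.sqrt (p 0))) * hqsq i.succ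
        · subst h1
          simp only [eq_self_iff_true, ite_true, if_true, if_neg h2]
          linear_combination (Real.sqrt (p i.succ) * Real.sqrt (p k'.succ) /
            (1 + Real.sqrt (p 0)) / (1 + Real.sqrt (p 0))) * hqsq i.succ
        · subst h2
          have h1' : ¬(j' = i) := fun h => h1 h.symm
          simp only [eq_self_iff_true, ite_true, if_true, if_neg h1, if_neg h1']
          linear_combination (Real.sqrt (p j'.succ) * Real.sqrt (p i.succ) /
            (1 + Real.sqrt (p 0)) / (1 + Real.sqrt (p 0))) * hqsq i.succ
        · simp only [if_neg h1, if_neg h2]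
          linear_combination (Real.sqrt (p j'.succ) * Real.sqrt (p k'.succ) /
            (1 + Real.sqrt (p 0)) / (1 + Real.sqrt (p 0))) * hqsq i.succ
      rw [Finset.sum_congr rfl fun i _ => expand i]
      rw [Finset.sum_add_distrib, Finset.sum_sub_distrib, Finset.sum_sub_distrib,
        Finset.sum_ite_eq' _ j', Finset.sum_ite_eq' _ j', Finset.sum_ite_eq' _ k',
        ← Finset.sum_mul, hsum']
      simp only [Finset.mem_univ, if_pos, Matrix.one_apply, Fin.succ_inj, key]
      by_cases h : j' = k'
      · subst h
        simp only [eq_self_iff_true, ite_true, if_true]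
        field_simp
        ring
      · simp only [if_neg h]
        field_simp
        ring
end
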